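/- arXiv:1908.09901 — 6 statements merged into one kernel-verified Lean document; each statement's English description precedes it below -/
import Mathlib

section
/- If S is a stationary subset of ω₁ endowed with the subspace topology, then the intersection of countably many subsets of S, each closed and unbounded in S, is again closed and unbounded in S. -/
/-!
Cut down to `ω₁`, the closure of each `C n` is a club of `ω₁`, because `S` is unbounded.
Countably many clubs of `ω₁` meet in a club: starting below `ω₁`, iterate the map sending `α`
to the supremum over `i` of a point of the `i`-th club above `α`; the supremum of the iterates
is approached by points of every club and stays below `ω₁` since `cof ω₁ = ℵ₁`. By
stationarity, `S` meets this intersection above any `α ∈ S`, and such a point lies in every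
`C n` because `C n` is closed in `S`.
-/

open Set Topology Ordinal

/-- A club (closed unbounded) subset of `ω₁` (as a set of ordinals with the order topology). -/
def IsClubBelowOmega1 (C : Set Ordinal) : Prop :=
  C ⊆ Set.Iio ω₁ ∧ (∀ α < ω₁, ∃ β ∈ C, α ≤ β) ∧ ∀ α < ω₁, α ∈ closure C → α ∈ C

/-- A stationary subset of `ω₁`. -/
def IsStationaryBelowOmega1 (S : Set Ordinal) : Prop :=
  S ⊆ Set.Iio ω₁ ∧ ∀ C : Set Ordinal, IsClubBelowOmega1 C → (S ∩ C).Nonempty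

/-- `C` is club in `S`: `C ⊆ S`, `C` is closed in the subspace topology of `S`
and unbounded in `S`. -/
def IsClubIn (C S : Set Ordinal) : Prop :=
  C ⊆ S ∧ (∀ α ∈ S, ∃ β ∈ C, α ≤ β) ∧ ∀ α ∈ S, α ∈ closure C → α ∈ C

theorem ciSup_eq_ciSup_of_interlace {α : Type*} [ConditionallyCompleteLattice α] {a b : ℕ → α}
    (ha : BddAbove (range a)) (hab : ∀ k, a k ≤ b k) (hba : ∀ k, b k ≤ a (k + 1)) :
    ⨆ k, a k = ⨆ k, b k := by
  have hb : BddAbove (range b) :=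
    ⟨⨆ k, a k, forall_mem_range.2 fun k => (hba k).trans (le_ciSup ha _)⟩
  exact le_antisymm (ciSup_mono hb hab) (ciSup_le fun k => (hba k).trans (le_ciSup ha _))

theorem exists_ge_lt_omega_one_forall_mem_closure {ι : Type*} [Countable ι]
    {s : ι → Set Ordinal} (hs : ∀ i, ∀ α < ω₁, ∃ β ∈ s i, α ≤ β ∧ β < ω₁)
    {δ : Ordinal} (hδ : δ < ω₁) : ∃ β, δ ≤ β ∧ β < ω₁ ∧ ∀ i, β ∈ closure (s i) := by
  choose! f hf using hs
  set a : ℕ → Ordinal := fun k => (fun α => ⨆ i, f i α)^[k] δ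
  have ha : ∀ k, a k < ω₁ := by
    intro k
    induction k with
    | zero => exact hδ
    | succ k ih =>
      simp only [a, Function.iterate_succ_apply']
      exact iSup_lt_omega_one fun i => (hf i _ ih).2.2
  have hfa : ∀ i k, f i (a k) ≤ a (k + 1) := by
    intro i k
    simp only [a, Function.iterate_succ_apply']
    exact le_ciSup bddAbove_of_small i
  refine ⟨⨆ k, a k, le_ciSup bddAbove_of_small 0, iSup_lt_omega_one ha, fun i => ?_⟩
  rw [ciSup_eq_ciSup_of_interlace (a := a) bddAbove_of_small (fun k => (hf i _ (ha k)).2.1)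
    (hfa i)]
  exact closure_mono (range_subset_iff.2 fun k => (hf i _ (ha k)).1)
    (csSup_mem_closure (range_nonempty _) bddAbove_of_small)

theorem isClubBelowOmega1_Iio : IsClubBelowOmega1 (Iio ω₁) :=
  ⟨subset_rfl, fun α hα => ⟨α, hα, le_rfl⟩, fun _ hα _ => hα⟩

namespace IsClubBelowOmega1

theorem iInter {ι : Type*} [Countable ι] [Nonempty ι] {C : ι → Set Ordinal}
    (hC : ∀ i, IsClubBelowOmega1 (C i)) : IsClubBelowOmega1 (⋂ i, C i) := by
  refine ⟨(iInter_subset _ (Classical.arbitrary ι)).trans (hC _).1, fun α hα => ?_,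
    fun α hα h => mem_iInter.2 fun i => (hC i).2.2 α hα (closure_mono (iInter_subset _ i) h)⟩
  obtain ⟨β, hαβ, hβ, hβC⟩ := exists_ge_lt_omega_one_forall_mem_closure
    (fun i γ hγ => ((hC i).2.1 γ hγ).imp fun β hβ => ⟨hβ.1, hβ.2, (hC i).1 hβ.1⟩) hα
  exact ⟨β, mem_iInter.2 fun i => (hC i).2.2 β hβ (hβC i), hαβ⟩

theorem inter_Ici {C : Set Ordinal} (hC : IsClubBelowOmega1 C) {α : Ordinal} (hα : α < ω₁) :
    IsClubBelowOmega1 (C ∩ Ici α) := by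
  refine ⟨inter_subset_left.trans hC.1, fun γ hγ => ?_, fun γ hγ h => ?_⟩
  · obtain ⟨β, hβC, hβ⟩ := hC.2.1 (max γ α) (max_lt hγ hα)
    exact ⟨β, ⟨hβC, (le_max_right _ _).trans hβ⟩, (le_max_left _ _).trans hβ⟩
  · have h' := closure_inter_subset_inter_closure _ _ h
    rw [closure_Ici] at h'
    exact ⟨hC.2.2 γ hγ h'.1, h'.2⟩

end IsClubBelowOmega1

namespace IsStationaryBelowOmega1

variable {S : Set Ordinal}

theorem exists_mem_inter_ge (hS : IsStationaryBelowOmega1 S) {C : Set Ordinal}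
    (hC : IsClubBelowOmega1 C) {α : Ordinal} (hα : α < ω₁) : ∃ β ∈ S ∩ C, α ≤ β := by
  obtain ⟨β, hβS, hβC, hαβ⟩ := hS.2 _ (hC.inter_Ici hα)
  exact ⟨β, ⟨hβS, hβC⟩, hαβ⟩

theorem isClubBelowOmega1_closure_inter_Iio (hS : IsStationaryBelowOmega1 S) {C : Set Ordinal}
    (hC : IsClubIn C S) : IsClubBelowOmega1 (closure C ∩ Iio ω₁) := by
  refine ⟨inter_subset_right, fun α hα => ?_, fun α hα h => ⟨?_, hα⟩⟩
  · obtain ⟨s, ⟨hsS, -⟩, hαs⟩ := hS.exists_mem_inter_ge isClubBelowOmega1_Iio hα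
    obtain ⟨β, hβC, hsβ⟩ := hC.2.1 s hsS
    exact ⟨β, ⟨subset_closure hβC, hS.1 (hC.1 hβC)⟩, hαs.trans hsβ⟩
  · exact closure_minimal inter_subset_left isClosed_closure h

end IsStationaryBelowOmega1

/-- in a stationary subset `S` of ω₁ (with the subspace topology), the
intersection of countably many subsets of `S` that are club in `S` is again club in `S`. -/
theorem iInter_isClubIn_of_stationary (S : Set Ordinal) (hS : IsStationaryBelowOmega1 S)
    (C : ℕ → Set Ordinal) (hC : ∀ n, IsClubIn (C n) S) :
    IsClubIn (⋂ n, C n) S := by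
  have hE := IsClubBelowOmega1.iInter fun n => hS.isClubBelowOmega1_closure_inter_Iio (hC n)
  refine ⟨(iInter_subset _ 0).trans (hC 0).1, fun α hα => ?_,
    fun α hα h => mem_iInter.2 fun n => (hC n).2.2 α hα (closure_mono (iInter_subset _ n) h)⟩
  obtain ⟨β, ⟨hβS, hβE⟩, hαβ⟩ := hS.exists_mem_inter_ge hE (hS.1 hα)
  exact ⟨β, mem_iInter.2 fun n => (hC n).2.2 β hβS (mem_iInter.1 hβE n).1, hαβ⟩
end

section
/- Let S be a stationary subset of ω₁ with the subspace topology, and let Y be a regular space with Gδ points that is [ℵ₀,ℵ₁]-compact. Then every continuous function f : S → Y is eventually constant: there exists α < ω₁ such that f(β) = f(α) for all β ∈ S with β ≥ α. -/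
open Set Topology Cardinal Ordinal

universe u

/-- `X` is [ℵ₀,ℵ₁]-compact: every open cover of size at most ℵ₁ has a countable subcover. -/
def AlephOneCompactSpace (X : Type u) [TopologicalSpace X] : Prop :=
  ∀ 𝒰 : Set (Set X), (∀ U ∈ 𝒰, IsOpen U) → #𝒰 ≤ aleph 1 → ⋃₀ 𝒰 = Set.univ →
    ∃ 𝒱 ⊆ 𝒰, 𝒱.Countable ∧ ⋃₀ 𝒱 = Set.univ

/-!
`f` has a cluster point `y` along the tails of `S`: otherwise the complements of the closures of
the images of the `ℵ₁` tails would be an open cover of `Y` with a countable subcover, and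
countably many tails of `S` have a common subtail because `cof ω₁ = ℵ₁`. The closures in `ω₁` of two
closed unbounded subsets of `S` are clubs, so these subsets meet in the stationary set `S`; by
regularity of `Y` this upgrades the cluster point to a limit, since otherwise the preimages of a
closed neighbourhood of `y` and of the complement of a larger open one would be two disjoint such
sets. Finally `{y}` is a countable intersection of open sets, each of which contains the image of
a tail of `S`.
-/

open Filter

theorem IsClosed.dirSupClosed {α : Type*} [TopologicalSpace α] [LinearOrder α] [OrderTopology α]
    {s : Set α} (hs : IsClosed s) : DirSupClosed s :=
  fun _ hd hne _ _ ha => hs.closure_subset_iff.2 hd (ha.mem_closure hne)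

theorem isClub_preimage_val_Iio {o : Ordinal} {C : Set Ordinal} (hC : IsClosed C)
    (hcof : IsCofinal (Subtype.val ⁻¹' C : Set (Iio o))) :
    IsClub (Subtype.val ⁻¹' C : Set (Iio o)) :=
  ⟨(hC.preimage continuous_subtype_val).dirSupClosed, hcof⟩

theorem IsClosed.isCofinal_preimage_val_inter {o : Ordinal} (ho : o.cof ≠ ℵ₀)
    {C D : Set Ordinal} (hC : IsClosed C) (hD : IsClosed D)
    (hCc : IsCofinal (Subtype.val ⁻¹' C : Set (Iio o)))
    (hDc : IsCofinal (Subtype.val ⁻¹' D : Set (Iio o))) :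
    IsCofinal (Subtype.val ⁻¹' (C ∩ D) : Set (Iio o)) := by
  have hcof : Order.cof (Iio o) ≠ ℵ₀ := by
    rw [Ordinal.cof_Iio, ← Ordinal.lift_cof, Ne, Cardinal.lift_eq_aleph0]
    exact ho
  exact ((isClub_preimage_val_Iio hC hCc).inter hcof (isClub_preimage_val_Iio hD hDc)).isCofinal

theorem lift_mk_le_aleph_one_of_subset_Iio {S : Set Ordinal} (hS : S ⊆ Iio ω₁) :
    Cardinal.lift.{u} #S ≤ ℵ₁ := by
  have h : #S ≤ ℵ₁ := by
    simpa [Cardinal.mk_Iio_ordinal] using mk_le_mk_of_subset hS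
  simpa using Cardinal.lift_le.{u}.2 h

namespace IsStationaryBelowOmega1

variable {S : Set Ordinal} (hS : IsStationaryBelowOmega1 S)
include hS

theorem inter_nonempty_of_isClosed {C : Set Ordinal} (hC : IsClosed C)
    (hcof : IsCofinal (Subtype.val ⁻¹' C : Set (Iio ω₁))) : (S ∩ C).Nonempty := by
  refine (hS.2 (C ∩ Iio ω₁) ⟨inter_subset_right, fun α hα => ?_, fun α hα h => ?_⟩).mono
    (inter_subset_inter_right _ inter_subset_left)
  · obtain ⟨β, hβC, hαβ⟩ := hcof ⟨α, hα⟩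
    exact ⟨β, ⟨hβC, β.2⟩, hαβ⟩
  · exact ⟨hC.closure_subset (closure_mono inter_subset_left h), hα⟩

theorem isCofinal : IsCofinal (Subtype.val ⁻¹' S : Set (Iio ω₁)) := by
  intro γ
  obtain ⟨β, hβS, hγβ⟩ := hS.inter_nonempty_of_isClosed (isClosed_Ici (a := γ.1))
    fun δ => ⟨⟨max γ.1 δ.1, max_lt (mem_Iio.1 γ.2) (mem_Iio.1 δ.2)⟩,
      le_max_left γ.1 δ.1, le_max_right γ.1 δ.1⟩
  exact ⟨⟨β, hS.1 hβS⟩, hβS, hγβ⟩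

theorem bddAbove_of_countable {s : Set S} (hs : s.Countable) : BddAbove s := by
  have := hs.to_subtype
  obtain ⟨⟨β, hβ⟩, hβS, hsβ⟩ :=
    hS.isCofinal ⟨⨆ x : s, x.1.1, Ordinal.iSup_lt_omega_one fun x => hS.1 x.1.2⟩
  exact ⟨⟨β, hβS⟩, fun x hx => (Ordinal.le_iSup (fun x : s => x.1.1) ⟨x, hx⟩).trans hsβ⟩

theorem isCofinal_closure_image {A : Set S} (hA : ∃ᶠ x in atTop, x ∈ A) :
    IsCofinal (Subtype.val ⁻¹' closure (Subtype.val '' A) : Set (Iio ω₁)) := by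
  intro γ
  obtain ⟨β, hβS, hγβ⟩ := hS.isCofinal γ
  obtain ⟨a, hβa, haA⟩ := hA.forall_exists_of_atTop ⟨β, hβS⟩
  exact ⟨⟨a, hS.1 a.2⟩, subset_closure ⟨a, haA, rfl⟩, hγβ.trans hβa⟩

theorem inter_nonempty_of_frequently {A B : Set S} (hA : IsClosed A) (hB : IsClosed B)
    (hAf : ∃ᶠ x in atTop, x ∈ A) (hBf : ∃ᶠ x in atTop, x ∈ B) : (A ∩ B).Nonempty := by
  obtain ⟨α, hαS, hαA, hαB⟩ := hS.inter_nonempty_of_isClosed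
    (isClosed_closure.inter isClosed_closure)
    (isClosed_closure.isCofinal_preimage_val_inter (by simpa using aleph0_lt_aleph_one.ne')
      isClosed_closure (hS.isCofinal_closure_image hAf) (hS.isCofinal_closure_image hBf))
  exact ⟨⟨α, hαS⟩, hA.closure_subset (closure_subtype.2 hαA),
    hB.closure_subset (closure_subtype.2 hαB)⟩

end IsStationaryBelowOmega1

theorem Filter.countableInterFilter_atTop {ι : Type*} [Preorder ι] [IsDirectedOrder ι]
    [Nonempty ι] (h : ∀ s : Set ι, s.Countable → BddAbove s) :
    CountableInterFilter (atTop : Filter ι) := by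
  refine ⟨fun 𝒮 h𝒮 hmem => ?_⟩
  choose! a ha using fun s hs => eventually_atTop.1 (hmem s hs)
  obtain ⟨b, hb⟩ := h _ (h𝒮.image a)
  exact eventually_atTop.2
    ⟨b, fun c hbc s hs => ha s hs c ((hb (mem_image_of_mem a hs)).trans hbc)⟩

theorem AlephOneCompactSpace.exists_mapClusterPt_atTop {X : Type u} [TopologicalSpace X]
    (hX : AlephOneCompactSpace X) {ι : Type*} [Preorder ι] [IsDirectedOrder ι] [Nonempty ι]
    [CountableInterFilter (atTop : Filter ι)] (hι : Cardinal.lift.{u} #ι ≤ ℵ₁) (f : ι → X) :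
    ∃ x, MapClusterPt x atTop f := by
  simp_rw [mapClusterPt_atTop_iff_forall_mem_closure]
  by_contra! h
  set U : ι → Set X := fun i => (closure (f '' Ici i))ᶜ
  have hcard : #(range U) ≤ ℵ₁ := by
    simpa using mk_range_le_lift.trans hι
  have hcover : ⋃₀ range U = Set.univ := sUnion_eq_univ_iff.2 fun x =>
    let ⟨i, hi⟩ := h x; ⟨U i, mem_range_self i, hi⟩
  obtain ⟨𝒱, h𝒱U, h𝒱c, h𝒱⟩ :=
    hX (range U) (forall_mem_range.2 fun i => isClosed_closure.isOpen_compl) hcard hcover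
  choose! j hj using fun V (hV : V ∈ 𝒱) => h𝒱U hV
  obtain ⟨b, hb⟩ :=
    Filter.nonempty_of_mem ((countable_bInter_mem h𝒱c).2 fun V _ => Ici_mem_atTop (j V))
  obtain ⟨V, hV, hbV⟩ := sUnion_eq_univ_iff.1 h𝒱 (f b)
  rw [← hj V hV] at hbV
  exact hbV (subset_closure ⟨b, mem_iInter₂.1 hb V hV, rfl⟩)

theorem tendsto_nhds_of_mapClusterPt {X Y : Type*} [TopologicalSpace X] [TopologicalSpace Y]
    [RegularSpace Y] {l : Filter X}
    (hl : ∀ A B : Set X, IsClosed A → IsClosed B → (∃ᶠ x in l, x ∈ A) → (∃ᶠ x in l, x ∈ B) →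
      (A ∩ B).Nonempty)
    {f : X → Y} (hf : Continuous f) {y : Y} (hy : MapClusterPt y l f) : Tendsto f l (𝓝 y) := by
  intro V hV
  obtain ⟨U, hUV, hU, hyU⟩ := mem_nhds_iff.1 hV
  obtain ⟨F, hF, hFc, hFU⟩ := exists_mem_nhds_isClosed_subset (hU.mem_nhds hyU)
  by_contra hVf
  obtain ⟨x, hxF, hxU⟩ := hl _ _ (hFc.preimage hf) (hU.isClosed_compl.preimage hf)
    (hy.frequently hF) ((not_eventually.1 hVf).mono fun x hx hxU => hx (hUV hxU))
  exact hxU (hFU hxF)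

theorem Filter.Tendsto.eventually_mem_of_isGδ {α X : Type*} [TopologicalSpace X] {l : Filter α}
    [CountableInterFilter l] {f : α → X} {x : X} (hf : Tendsto f l (𝓝 x)) {s : Set X}
    (hs : IsGδ s) (hx : x ∈ s) : ∀ᶠ a in l, f a ∈ s := by
  obtain ⟨T, hTo, hTc, rfl⟩ := hs
  exact (countable_sInter_mem hTc).2 fun t ht => hf ((hTo t ht).mem_nhds (hx t ht))

/-- Let S be a stationary subset of ω₁ with the subspace topology and Y a
regular space with Gδ points which is [ℵ₀,ℵ₁]-compact. Then every continuous f : S → Y is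
eventually constant. -/
theorem eventually_constant_of_continuous_on_stationary
    (S : Set Ordinal) (hS : IsStationaryBelowOmega1 S)
    (Y : Type u) [TopologicalSpace Y] [T3Space Y]
    (hGδ : ∀ y : Y, IsGδ ({y} : Set Y)) (hY : AlephOneCompactSpace Y)
    (f : S → Y) (hf : Continuous f) :
    ∃ (α : Ordinal) (hα : α ∈ S), ∀ (β : Ordinal) (hβ : β ∈ S),
      α ≤ β → f ⟨β, hβ⟩ = f ⟨α, hα⟩ := by
  obtain ⟨β, hβS, -⟩ := hS.isCofinal ⟨0, omega_pos 1⟩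
  have : Nonempty S := ⟨⟨β, hβS⟩⟩
  have := countableInterFilter_atTop fun _ => hS.bddAbove_of_countable
  obtain ⟨y, hy⟩ := hY.exists_mapClusterPt_atTop (lift_mk_le_aleph_one_of_subset_Iio hS.1) f
  have hlim := tendsto_nhds_of_mapClusterPt (fun _ _ => hS.inter_nonempty_of_frequently) hf hy
  obtain ⟨α, hα⟩ := eventually_atTop.1 (hlim.eventually_mem_of_isGδ (hGδ y) rfl)
  exact ⟨α, α.2, fun β hβ hαβ => (hα ⟨β, hβ⟩ hαβ).trans (hα α le_rfl).symm⟩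
end

section
/- Let S be a stationary subset of ω₁ with the subspace topology, Y a regular space with Gδ points, and U ⊆ Y open with closure(U) [ℵ₀,ℵ₁]-compact. For any continuous h : S × [0,1] → Y there exists α < ω₁ such that for every t ∈ [0,1], either h(·,t)⁻¹(U) ∩ S ∩ [α,ω₁) = ∅, or h(·,t) is constant on S ∩ [α,ω₁). -/
open Set Topology Cardinal Ordinal unitInterval

universe u

/-- A subset `A` of `Y` is [ℵ₀,ℵ₁]-compact: every cover of `A` by at most ℵ₁ many open
sets has a countable subcover. -/
def AlephOneCompactSet {Y : Type u} [TopologicalSpace Y] (A : Set Y) : Prop :=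
  ∀ 𝒰 : Set (Set Y), (∀ U ∈ 𝒰, IsOpen U) → #𝒰 ≤ aleph 1 → A ⊆ ⋃₀ 𝒰 →
    ∃ 𝒱 ⊆ 𝒰, 𝒱.Countable ∧ A ⊆ ⋃₀ 𝒱

/-!
Fix `t` and put `f = h(·,t)`. If `f⁻¹(U)` is bounded in `ω₁` the first alternative holds from
some point on. Otherwise the [ℵ₀,ℵ₁]-compactness of `closure U` yields a point `y` every
neighbourhood of which has an unbounded preimage under `f`. Write `{y} = ⋂ Kₙ` with closed
neighbourhoods `Kₙ` of `y`. If some `f⁻¹(Kₙᶜ)` were unbounded, stationarity of `S` would give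
`β ∈ S` in the closure of `f⁻¹(Kₙᶜ)` and of every `f⁻¹(interior Kₘ)`; by continuity `f β = y`
and `y ∈ closure Kₙᶜ`, which is absurd. So `f` is eventually equal to `y`.
The bound `α(t)` obtained this way works for every limit of the `h(·,tₙ)`, so the supremum of
`α` over a countable dense subset of `[0,1]` works for all `t`.
-/

open Filter

universe v w

def IsUnboundedBelowOmega1 (A : Set Ordinal) : Prop :=
  ∀ a < ω₁, ∃ b ∈ A, a ≤ b

theorem not_isUnboundedBelowOmega1 {A : Set Ordinal} :
    ¬IsUnboundedBelowOmega1 A ↔ ∃ a < ω₁, ∀ b ∈ A, b < a := by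
  simp [IsUnboundedBelowOmega1]

theorem IsUnboundedBelowOmega1.mono {A B : Set Ordinal} (hA : IsUnboundedBelowOmega1 A)
    (hAB : A ⊆ B) : IsUnboundedBelowOmega1 B :=
  fun a ha => (hA a ha).imp fun _ hb => ⟨hAB hb.1, hb.2⟩

theorem mk_image_Iio_omega_one_le {β : Type u} (G : Ordinal.{v} → β) :
    #(G '' Iio ω₁) ≤ ℵ₁ := by
  have h := @mk_image_le_lift _ _ G (Iio ω₁)
  rw [Cardinal.mk_Iio_ordinal, card_omega, Cardinal.lift_lift, lift_aleph, Ordinal.lift_one] at h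
  rw [← Cardinal.lift_le.{v + 1}, lift_aleph, Ordinal.lift_one]
  exact h

/-- A sequence that keeps returning to every `T i` has its supremum in each `closure (T i)`. -/
theorem exists_forall_mem_closure_of_isUnboundedBelowOmega1 {ι : Type w} [Countable ι]
    {T : ι → Set Ordinal.{v}} (hT : ∀ i, T i ⊆ Iio ω₁)
    (hunb : ∀ i, IsUnboundedBelowOmega1 (T i)) {a : Ordinal.{v}} (ha : a < ω₁) :
    ∃ l < ω₁, a ≤ l ∧ ∀ i, l ∈ closure (T i) := by
  rcases isEmpty_or_nonempty ι with hι | hι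
  · exact ⟨a, ha, le_rfl, isEmptyElim⟩
  obtain ⟨e, he⟩ := exists_surjective_nat ι
  choose g hgT hgle using fun i (x : Iio (ω₁ : Ordinal.{v})) => hunb i x x.2
  let s : ℕ → Iio (ω₁ : Ordinal.{v}) := fun j =>
    Nat.rec ⟨a, ha⟩ (fun j x => ⟨g (e j.unpair.1) x, hT _ (hgT _ _)⟩) j
  have hs_succ : ∀ j, (s (j + 1)).1 = g (e j.unpair.1) (s j) := fun _ => rfl
  have hs_mono : Monotone fun j => (s j).1 := by
    refine monotone_nat_of_le_succ fun j => ?_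
    rw [hs_succ]
    exact hgle _ _
  have hs_lim : Tendsto (fun j => (s j).1) atTop (𝓝 (⨆ j, (s j).1)) :=
    tendsto_atTop_ciSup hs_mono bddAbove_of_small
  refine ⟨_, iSup_lt_omega_one fun j => (s j).2, Ordinal.le_iSup (fun j => (s j).1) 0,
    fun i => ?_⟩
  obtain ⟨n, rfl⟩ := he i
  have hsub : Tendsto (fun k => Nat.pair n k + 1) atTop atTop :=
    tendsto_atTop_mono (fun k => (Nat.right_le_pair n k).trans (Nat.le_succ _)) tendsto_id
  refine mem_closure_of_tendsto (hs_lim.comp hsub) (Eventually.of_forall fun k => ?_)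
  simp only [Function.comp_apply, hs_succ, Nat.unpair_pair]
  exact hgT _ _

theorem isClubBelowOmega1_setOf_forall_mem_closure {ι : Type w} [Countable ι]
    {T : ι → Set Ordinal.{v}} (hT : ∀ i, T i ⊆ Iio ω₁)
    (hunb : ∀ i, IsUnboundedBelowOmega1 (T i)) :
    IsClubBelowOmega1 {l | l < ω₁ ∧ ∀ i, l ∈ closure (T i)} := by
  refine ⟨fun _ hl => hl.1, fun a ha => ?_, fun a ha hcl => ⟨ha, fun i => ?_⟩⟩
  · obtain ⟨l, hl, hal, hcl⟩ := exists_forall_mem_closure_of_isUnboundedBelowOmega1 hT hunb ha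
    exact ⟨l, ⟨hl, hcl⟩, hal⟩
  · exact closure_closure.subset (closure_mono (fun _ hl => hl.2 i) hcl)

theorem IsStationaryBelowOmega1.exists_forall_mem_closure {S : Set Ordinal.{v}}
    (hS : IsStationaryBelowOmega1 S) {ι : Type w} [Countable ι] (A : ι → Set S)
    (hA : ∀ i, IsUnboundedBelowOmega1 ((↑) '' A i)) :
    ∃ x : S, ∀ i, x ∈ closure (A i) := by
  obtain ⟨β, hβS, -, hβ⟩ := hS.2 _ (isClubBelowOmega1_setOf_forall_mem_closure
    (fun _ => (image_subset_range _ _).trans (Subtype.range_coe.trans_subset hS.1)) hA)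
  exact ⟨⟨β, hβS⟩, fun i => by rw [closure_subtype]; exact hβ i⟩

section

variable {Y : Type u} {S : Set Ordinal.{v}}

def TailDichotomy (U : Set Y) (f : S → Y) (α : Ordinal.{v}) : Prop :=
  (∀ x : S, α ≤ x.1 → f x ∉ U) ∨ ∀ x z : S, α ≤ x.1 → α ≤ z.1 → f x = f z

theorem TailDichotomy.mono {U : Set Y} {f : S → Y} {α β : Ordinal.{v}}
    (h : TailDichotomy U f α) (hαβ : α ≤ β) : TailDichotomy U f β :=
  h.imp (fun H x hx => H x (hαβ.trans hx))
    fun H x z hx hz => H x z (hαβ.trans hx) (hαβ.trans hz)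

variable [TopologicalSpace Y]

theorem exists_forall_nhds_isUnboundedBelowOmega1 {f : S → Y} {A : Set Y}
    (hA : AlephOneCompactSet A) (hunb : IsUnboundedBelowOmega1 ((↑) '' (f ⁻¹' A))) :
    ∃ y, ∀ W ∈ 𝓝 y, IsUnboundedBelowOmega1 ((↑) '' (f ⁻¹' W)) := by
  by_contra! hcon
  simp only [not_isUnboundedBelowOmega1] at hcon
  choose W hW b hb hbW using hcon
  -- The `G a` form an open cover of `A` of size `ℵ₁`; a countable subcover bounds `f⁻¹(A)`.
  let G : Ordinal.{v} → Set Y := fun a => ⋃ (y) (_ : b y ≤ a), interior (W y)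
  obtain ⟨𝒱, h𝒱, h𝒱c, hcov⟩ := hA (G '' Iio ω₁)
    (by rintro _ ⟨a, -, rfl⟩; exact isOpen_biUnion fun _ _ => isOpen_interior)
    (mk_image_Iio_omega_one_le G)
    (fun y _ => mem_sUnion.2 ⟨G (b y), mem_image_of_mem _ (hb y),
      mem_biUnion (le_refl (b y)) (mem_interior_iff_mem_nhds.2 (hW y))⟩)
  choose a ha haV using fun V : 𝒱 => h𝒱 V.2
  have : Countable 𝒱 := h𝒱c.to_subtype
  obtain ⟨_, ⟨x, hxA, rfl⟩, hx⟩ := hunb _ (iSup_lt_omega_one ha)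
  obtain ⟨V, hV, hxV⟩ := mem_sUnion.1 (hcov hxA)
  have hxG : f x ∈ G (a ⟨V, hV⟩) := (haV ⟨V, hV⟩).symm ▸ hxV
  obtain ⟨y, hy, hxW⟩ := mem_iUnion₂.1 hxG
  exact (hbW y _ ⟨x, (interior_subset hxW : f x ∈ W y), rfl⟩).not_ge
    (hy.trans ((Ordinal.le_iSup a ⟨V, hV⟩).trans hx))

theorem IsStationaryBelowOmega1.exists_eq_of_forall_nhds_isUnboundedBelowOmega1
    [RegularSpace Y] (hS : IsStationaryBelowOmega1 S) {f : S → Y} (hf : Continuous f) {y : Y}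
    (hy : IsGδ {y}) (hunb : ∀ W ∈ 𝓝 y, IsUnboundedBelowOmega1 ((↑) '' (f ⁻¹' W))) :
    ∃ α < ω₁, ∀ x : S, α ≤ x.1 → f x = y := by
  obtain ⟨V, hVo, hV⟩ := isGδ_iff_eq_iInter_nat.1 hy
  have hyV : ∀ n, y ∈ V n := mem_iInter.1 (hV ▸ mem_singleton y)
  choose K hKy hKc hKV using fun n => exists_mem_nhds_isClosed_subset ((hVo n).mem_nhds (hyV n))
  have hbdd : ∀ n, ¬IsUnboundedBelowOmega1 ((↑) '' (f ⁻¹' (K n)ᶜ)) := by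
    intro n hcon
    obtain ⟨x, hx⟩ := hS.exists_forall_mem_closure
      (fun i : Option ℕ => i.elim (f ⁻¹' (K n)ᶜ) fun m => f ⁻¹' interior (K m))
      (Option.rec hcon fun m => hunb _ (interior_mem_nhds.2 (hKy m)))
    have hfx : f x = y := by
      rw [← mem_singleton_iff, hV]
      exact mem_iInter.2 fun m => hKV m <| (hKc m).closure_eq ▸
        map_mem_closure hf (hx (some m)) fun _ h => interior_subset (s := K m) h
    have hy_cl : y ∈ closure (K n)ᶜ := hfx ▸ map_mem_closure hf (hx none) fun _ h => h
    rw [closure_compl] at hy_cl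
    exact hy_cl (mem_interior_iff_mem_nhds.2 (hKy n))
  choose b hb hbK using fun n => not_isUnboundedBelowOmega1.1 (hbdd n)
  refine ⟨⨆ n, b n, iSup_lt_omega_one hb, fun x hx => ?_⟩
  rw [← mem_singleton_iff, hV]
  exact mem_iInter.2 fun n => hKV n <| not_not.1 fun h =>
    ((Ordinal.le_iSup b n).trans hx).not_gt (hbK n _ ⟨x, h, rfl⟩)

theorem TailDichotomy.of_tendsto [T2Space Y] {U : Set Y} (hU : IsOpen U) {ι : Type w}
    {l : Filter ι} [l.NeBot] {F : ι → S → Y} {f : S → Y} {α : Ordinal.{v}}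
    (hF : ∀ x, Tendsto (fun i => F i x) l (𝓝 (f x))) (h : ∀ i, TailDichotomy U (F i) α) :
    TailDichotomy U f α := by
  by_cases hfreq : ∃ᶠ i in l, ∀ x : S, α ≤ x.1 → F i x ∉ U
  · exact Or.inl fun x hx =>
      hU.isClosed_compl.mem_of_frequently_of_tendsto (hfreq.mono fun i hi => hi x hx) (hF x)
  · have hev : ∀ᶠ i in l, ∀ x z : S, α ≤ x.1 → α ≤ z.1 → F i x = F i z :=
      (not_frequently.1 hfreq).mono fun i hi => (h i).resolve_left hi
    exact Or.inr fun x z hx hz =>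
      tendsto_nhds_unique_of_eventuallyEq (hF x) (hF z) (hev.mono fun i hi => hi x z hx hz)

theorem IsStationaryBelowOmega1.exists_tailDichotomy [RegularSpace Y]
    (hS : IsStationaryBelowOmega1 S) (hGδ : ∀ y : Y, IsGδ ({y} : Set Y)) {U : Set Y}
    (hUc : AlephOneCompactSet (closure U)) {f : S → Y} (hf : Continuous f) :
    ∃ α < ω₁, TailDichotomy U f α := by
  by_cases hunb : IsUnboundedBelowOmega1 ((↑) '' (f ⁻¹' U))
  · obtain ⟨y, hy⟩ := exists_forall_nhds_isUnboundedBelowOmega1 hUc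
      (hunb.mono (image_mono (preimage_mono subset_closure)))
    obtain ⟨α, hα, hfy⟩ := hS.exists_eq_of_forall_nhds_isUnboundedBelowOmega1 hf (hGδ y) hy
    exact ⟨α, hα, Or.inr fun x z hx hz => (hfy x hx).trans (hfy z hz).symm⟩
  · obtain ⟨α, hα, hbd⟩ := not_isUnboundedBelowOmega1.1 hunb
    exact ⟨α, hα, Or.inl fun x hx hxU => (hbd _ ⟨x, hxU, rfl⟩).not_ge hx⟩

end

/-- Let S be a stationary subset of ω₁ with the subspace topology, Y regular
with Gδ points, and U ⊆ Y open with [ℵ₀,ℵ₁]-compact closure. For every continuous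
h : S × [0,1] → Y there is α < ω₁ such that for each t, either h(·,t)⁻¹(U) misses
S ∩ [α,ω₁), or h(·,t) is constant on S ∩ [α,ω₁). -/
theorem eventually_dichotomy_of_homotopy_on_stationary
    (S : Set Ordinal) (hS : IsStationaryBelowOmega1 S)
    (Y : Type u) [TopologicalSpace Y] [T3Space Y]
    (hGδ : ∀ y : Y, IsGδ ({y} : Set Y))
    (U : Set Y) (hU : IsOpen U) (hUc : AlephOneCompactSet (closure U))
    (h : S × unitInterval → Y) (hh : Continuous h) :
    ∃ α < ω₁, ∀ t : unitInterval,
      (∀ (β : Ordinal) (hβ : β ∈ S), α ≤ β → h (⟨β, hβ⟩, t) ∉ U) ∨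
      (∀ (β γ : Ordinal) (hβ : β ∈ S) (hγ : γ ∈ S),
        α ≤ β → α ≤ γ → h (⟨β, hβ⟩, t) = h (⟨γ, hγ⟩, t)) := by
  choose α hα hdich using fun t : I =>
    hS.exists_tailDichotomy hGδ hUc (hh.comp (Continuous.prodMk_left t))
  obtain ⟨D, hDc, hDd⟩ := TopologicalSpace.exists_countable_dense I
  have : Countable D := hDc.to_subtype
  have hle : ∀ s : D, α s ≤ ⨆ t : D, α t := Ordinal.le_iSup _
  refine ⟨⨆ t : D, α t, iSup_lt_omega_one fun t => hα t, fun t => ?_⟩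
  obtain ⟨x, hxD, hxt⟩ := mem_closure_iff_seq_limit.1 (hDd t)
  have hlim : TailDichotomy U (fun s => h (s, t)) (⨆ t : D, α t) :=
    TailDichotomy.of_tendsto hU
      (fun s => ((hh.comp (Continuous.prodMk_right s)).tendsto t).comp hxt)
      fun n => (hdich (x n)).mono (hle ⟨x n, hxD n⟩)
  exact hlim.imp (fun H β hβ => H ⟨β, hβ⟩) fun H β γ hβ hγ => H ⟨β, hβ⟩ ⟨γ, hγ⟩
end

section
/- Let X be a regular space with Gδ points such that every point has a closed [ℵ₀,ℵ₁]-compact neighborhood, and let S be a stationary subset of ω₁ with the subspace topology. Then there is no continuous h : S × [0,1] → X such that h(·,0) is constant and h(·,1) has uncountable image. -/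
open Set Topology Cardinal Ordinal unitInterval

universe u

/-!
Call `t ∈ [0,1]` good if `h(·,t)` is constant on a tail of `S`. A map that is constant on a tail
of `S` has countable range, and `0` is good, so by connectedness it suffices that the good set is
clopen. It is closed since tails are closed under countable intersections. It is open by Fodor's
lemma: if `h(·,t)` is eventually `y` and `K` is an [ℵ₀,ℵ₁]-compact neighbourhood of `y`, pressing
down yields a tail of `S` and a neighbourhood `N` of `t` with `h(tail × N) ⊆ K`. Every point of
`N` is then good, because a continuous map on a stationary set that eventually lands in `K` has
a cluster point `z ∈ K` (by [ℵ₀,ℵ₁]-compactness against the ℵ₁ tails), converges to `z` (by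
regularity and Fodor again), and so is eventually equal to `z`, as `{z}` is a Gδ.
-/

open Filter

lemma countable_Iio_of_lt_omega_one {a : Ordinal} (h : a < ω₁) : (Iio a).Countable := by
  rw [← le_aleph0_iff_set_countable, Cardinal.mk_Iio_ordinal, lift_le_aleph0]
  rwa [← ord_aleph, lt_ord, ← succ_aleph0, Order.lt_succ_iff] at h

lemma Set.Countable.exists_lt_omega_one_forall_le {A : Set Ordinal} (hA : A.Countable)
    (h : A ⊆ Iio ω₁) : ∃ β < ω₁, ∀ a ∈ A, a ≤ β := by
  have := hA.to_subtype
  exact ⟨⨆ a : A, a.1, Ordinal.iSup_lt_omega_one fun a => h a.2,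
    fun a ha => Ordinal.le_iSup (fun a : A => a.1) ⟨a, ha⟩⟩

lemma Ordinal.mem_closure_iff_forall_exists_Ioc {C : Set Ordinal} {α : Ordinal} (hα : 0 < α) :
    α ∈ closure C ↔ ∀ b < α, ∃ c ∈ C, c ∈ Ioc b α :=
  mem_closure_iff_nhds_basis (SuccOrder.hasBasis_nhds_Ioc_of_exists_lt ⟨0, hα⟩)

lemma IsClubBelowOmega1.exists_gt {C : Set Ordinal} (hC : IsClubBelowOmega1 C) {b : Ordinal}
    (hb : b < ω₁) : ∃ c ∈ C, b < c := by
  obtain ⟨c, hcC, hbc⟩ := hC.2.1 (Order.succ b) ((isSuccLimit_omega 1).succ_lt hb)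
  exact ⟨c, hcC, (Order.lt_succ b).trans_le hbc⟩

lemma IsClubBelowOmega1.mem_of_forall_exists_Ioo {C : Set Ordinal} (hC : IsClubBelowOmega1 C)
    {α : Ordinal} (hα : α < ω₁) (hα₀ : 0 < α) (h : ∀ b < α, ∃ c ∈ C, c ∈ Ioo b α) : α ∈ C :=
  hC.2.2 α hα <| (Ordinal.mem_closure_iff_forall_exists_Ioc hα₀).2 fun b hb =>
    (h b hb).imp fun _ ⟨hcC, hbc, hcα⟩ => ⟨hcC, hbc, hcα.le⟩

lemma isClubBelowOmega1_Ioo {β : Ordinal} (hβ : β < ω₁) : IsClubBelowOmega1 (Ioo β ω₁) := by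
  refine ⟨fun α hα => hα.2, fun α hα => ?_, fun α hα hcl => ⟨?_, hα⟩⟩
  · refine ⟨max (Order.succ β) α, ⟨?_, ?_⟩, le_max_right _ _⟩
    · exact (Order.lt_succ β).trans_le (le_max_left _ _)
    · exact max_lt ((isSuccLimit_omega 1).succ_lt hβ) hα
  · have : closure (Ioo β ω₁) ⊆ Ici (Order.succ β) :=
      closure_minimal (fun x hx => Order.succ_le_of_lt hx.1) isClosed_Ici
    exact (Order.lt_succ β).trans_le (this hcl)

lemma isClubBelowOmega1_closure {A : Set Ordinal} (hAω : A ⊆ Iio ω₁)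
    (hA : ∀ β < ω₁, ∃ α ∈ A, β ≤ α) : IsClubBelowOmega1 (closure A ∩ Iio ω₁) := by
  refine ⟨inter_subset_right, fun β hβ => ?_, fun α hα hcl => ⟨?_, hα⟩⟩
  · obtain ⟨α, hαA, hβα⟩ := hA β hβ
    exact ⟨α, ⟨subset_closure hαA, hAω hαA⟩, hβα⟩
  · simpa using closure_mono inter_subset_left hcl

def closurePointsBelowOmega1 (g : Ordinal → Ordinal) : Set Ordinal :=
  {γ | γ < ω₁ ∧ ∀ b < γ, g b < γ}

lemma isClubBelowOmega1_closurePoints {g : Ordinal → Ordinal} (hg : ∀ b < ω₁, g b < ω₁) :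
    IsClubBelowOmega1 (closurePointsBelowOmega1 g) := by
  refine ⟨fun γ hγ => hγ.1, fun α hα => ?_, fun α hα hcl => ⟨hα, fun b hb => ?_⟩⟩
  · have hstep : ∀ x < ω₁, ∃ y < ω₁, ∀ b < x, g b < y := by
      intro x hx
      obtain ⟨β, hβ, hgβ⟩ :=
        ((countable_Iio_of_lt_omega_one hx).image g).exists_lt_omega_one_forall_le
          (by rintro _ ⟨b, hb, rfl⟩; exact hg b (hb.trans hx))
      exact ⟨Order.succ β, (isSuccLimit_omega 1).succ_lt hβ,
        fun b hb => (hgβ _ (mem_image_of_mem g hb)).trans_lt (Order.lt_succ β)⟩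
    choose! G hGω hG using hstep
    have hiter : ∀ n, G^[n] α < ω₁ := by
      intro n
      induction n with
      | zero => exact hα
      | succ n ih => rw [Function.iterate_succ_apply']; exact hGω _ ih
    refine ⟨nfp G α, ⟨?_, fun b hb => ?_⟩, le_nfp G α⟩
    · rw [← iSup_iterate_eq_nfp]
      exact Ordinal.iSup_lt_omega_one hiter
    · obtain ⟨n, hn⟩ := lt_nfp_iff.1 hb
      calc g b < G (G^[n] α) := hG _ (hiter n) b hn
        _ = G^[n + 1] α := (Function.iterate_succ_apply' G n α).symm
        _ ≤ nfp G α := iterate_le_nfp G α (n + 1)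
  · obtain ⟨c, hc, hbc, hcα⟩ :=
      (Ordinal.mem_closure_iff_forall_exists_Ioc (pos_of_gt hb)).1 hcl b hb
    exact (hc.2 b hbc).trans_le hcα

lemma IsClubBelowOmega1.inter {C D : Set Ordinal} (hC : IsClubBelowOmega1 C)
    (hD : IsClubBelowOmega1 D) : IsClubBelowOmega1 (C ∩ D) := by
  refine ⟨fun x hx => hC.1 hx.1, fun α hα => ?_, fun α hα hcl =>
    ⟨hC.2.2 α hα (closure_mono inter_subset_left hcl),
      hD.2.2 α hα (closure_mono inter_subset_right hcl)⟩⟩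
  choose! nC hnC hbnC using fun b (hb : b < ω₁) => hC.exists_gt hb
  choose! nD hnD hbnD using fun b (hb : b < ω₁) => hD.exists_gt hb
  have hg : ∀ b < ω₁, max (nC b) (nD b) < ω₁ :=
    fun b hb => max_lt (hC.1 (hnC b hb)) (hD.1 (hnD b hb))
  obtain ⟨γ, ⟨hγ, hγg⟩, hαγ⟩ := (isClubBelowOmega1_closurePoints hg).2.1 (max α 1)
    (max_lt hα (one_lt_omega0.trans omega0_lt_omega_one))
  have hγ₀ : 0 < γ := zero_lt_one.trans_le ((le_max_right α 1).trans hαγ)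
  refine ⟨γ, ⟨hC.mem_of_forall_exists_Ioo hγ hγ₀ fun b hb => ?_,
    hD.mem_of_forall_exists_Ioo hγ hγ₀ fun b hb => ?_⟩, (le_max_left α 1).trans hαγ⟩
  · exact ⟨nC b, hnC b (hb.trans hγ), hbnC b (hb.trans hγ), (le_max_left _ _).trans_lt (hγg b hb)⟩
  · exact ⟨nD b, hnD b (hb.trans hγ), hbnD b (hb.trans hγ), (le_max_right _ _).trans_lt (hγg b hb)⟩

lemma IsStationaryBelowOmega1.inter_club {S C : Set Ordinal} (hS : IsStationaryBelowOmega1 S)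
    (hC : IsClubBelowOmega1 C) : IsStationaryBelowOmega1 (S ∩ C) :=
  ⟨fun _ hx => hS.1 hx.1, fun D hD => (hS.2 _ (hC.inter hD)).mono (inter_assoc S C D).ge⟩

lemma IsStationaryBelowOmega1.mono {S T : Set Ordinal} (hS : IsStationaryBelowOmega1 S)
    (hST : S ⊆ T) (hT : T ⊆ Iio ω₁) : IsStationaryBelowOmega1 T :=
  ⟨hT, fun C hC => (hS.2 C hC).mono (inter_subset_inter_left C hST)⟩

lemma IsStationaryBelowOmega1.exists_gt {S : Set Ordinal} (hS : IsStationaryBelowOmega1 S)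
    {β : Ordinal} (hβ : β < ω₁) : ∃ α ∈ S, β < α :=
  (hS.2 _ (isClubBelowOmega1_Ioo hβ)).imp fun _ hα => ⟨hα.1, hα.2.1⟩

lemma IsStationaryBelowOmega1.of_closure_inter_subset {S A : Set Ordinal}
    (hS : IsStationaryBelowOmega1 S) (hAS : A ⊆ S) (hA : S ∩ closure A ⊆ A)
    (hAcof : ∀ β < ω₁, ∃ α ∈ A, β ≤ α) : IsStationaryBelowOmega1 A :=
  (hS.inter_club (isClubBelowOmega1_closure (hAS.trans hS.1) hAcof)).mono
    (fun _ ⟨hαS, hαA, _⟩ => hA ⟨hαS, hαA⟩) (hAS.trans hS.1)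

/-- Fodor's lemma, weak form. -/
theorem IsStationaryBelowOmega1.exists_cofinal_fiber {T : Set Ordinal}
    (hT : IsStationaryBelowOmega1 T) {r : Ordinal → Ordinal} (hr : ∀ α ∈ T, r α < α) :
    ∃ b < ω₁, ∀ β < ω₁, ∃ α ∈ T, β ≤ α ∧ r α = b := by
  by_contra! h
  choose! g hgω hg using h
  obtain ⟨α, hαT, hα⟩ := hT.2 _ (isClubBelowOmega1_closurePoints hgω)
  exact hg (r α) ((hr α hαT).trans hα.1) α hαT (hα.2 _ (hr α hαT)).le rfl

lemma exists_cofinal_fiber_of_countable {ι : Type*} [Countable ι] {A : Set Ordinal}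
    (hA : ∀ β < ω₁, ∃ α ∈ A, β ≤ α) (m : Ordinal → ι) :
    ∃ i, ∀ β < ω₁, ∃ α ∈ A, β ≤ α ∧ m α = i := by
  by_contra! h
  choose β hβω hβ using h
  obtain ⟨α, hαA, hα⟩ := hA _ (Ordinal.iSup_lt_omega_one hβω)
  exact hβ (m α) α hαA ((Ordinal.le_iSup β (m α)).trans hα) rfl

def tailBelowOmega1 (S : Set Ordinal) : Filter S :=
  Filter.ofCountableInter {s | ∃ β < ω₁, ∀ p : S, β < p.1 → p ∈ s}
    (fun 𝒮 h𝒮 h𝒮l => by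
      choose! β hβω hβ using h𝒮l
      obtain ⟨β₀, hβ₀, hββ₀⟩ := (h𝒮.image β).exists_lt_omega_one_forall_le
        (by rintro _ ⟨s, hs, rfl⟩; exact hβω hs)
      exact ⟨β₀, hβ₀, fun p hp s hs => hβ hs p ((hββ₀ _ (mem_image_of_mem β hs)).trans_lt hp)⟩)
    (fun _ _ ⟨β, hβ, hs⟩ hst => ⟨β, hβ, fun p hp => hst (hs p hp)⟩)

instance (S : Set Ordinal) : CountableInterFilter (tailBelowOmega1 S) :=
  Filter.countableInter_ofCountableInter _ _ _

lemma eventually_tailBelowOmega1 {S : Set Ordinal} {P : S → Prop} :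
    (∀ᶠ p in tailBelowOmega1 S, P p) ↔ ∃ β < ω₁, ∀ p : S, β < p.1 → P p :=
  Iff.rfl

lemma IsStationaryBelowOmega1.neBot_tail {S : Set Ordinal} (hS : IsStationaryBelowOmega1 S) :
    (tailBelowOmega1 S).NeBot := by
  refine ⟨fun h => ?_⟩
  obtain ⟨β, hβ, hβS⟩ : ∅ ∈ tailBelowOmega1 S := h ▸ mem_bot
  obtain ⟨α, hαS, hβα⟩ := hS.exists_gt hβ
  exact hβS ⟨α, hαS⟩ hβα

theorem IsStationaryBelowOmega1.exists_eventually_of_forall_Ioc {ι : Type*} [Countable ι]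
    {S T : Set Ordinal} (hS : S ⊆ Iio ω₁) (hT : IsStationaryBelowOmega1 T) {P : ι → S → Prop}
    (h : ∀ α ∈ T, 0 < α → ∃ c < α, ∃ i, ∀ q : S, q.1 ∈ Ioc c α → P i q) :
    ∃ i, ∀ᶠ q in tailBelowOmega1 S, P i q := by
  have hT₀ := hT.inter_club (isClubBelowOmega1_Ioo (omega_pos 1))
  have : Nonempty ι := by
    obtain ⟨α, hαT, hα₀, -⟩ := hT.2 _ (isClubBelowOmega1_Ioo (omega_pos 1))
    obtain ⟨-, -, i, -⟩ := h α hαT hα₀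
    exact ⟨i⟩
  choose! c hc i hi using fun α (hα : α ∈ T ∩ Ioo 0 ω₁) => h α hα.1 hα.2.1
  obtain ⟨c₀, hc₀, hfiber⟩ := hT₀.exists_cofinal_fiber hc
  obtain ⟨i₀, hi₀⟩ := exists_cofinal_fiber_of_countable (A := {α ∈ T ∩ Ioo 0 ω₁ | c α = c₀})
    (fun β hβ => (hfiber β hβ).imp fun α ⟨hα, hβα, hcα⟩ => ⟨⟨hα, hcα⟩, hβα⟩) i
  refine ⟨i₀, c₀, hc₀, fun q hq => ?_⟩
  obtain ⟨α, ⟨hα, hcα⟩, hqα, hiα⟩ := hi₀ q.1 (hS q.2)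
  exact hiα ▸ hi α hα q ⟨hcα ▸ hq, hqα⟩

lemma exists_Ioc_subset_of_mem_nhds_subtype {S : Set Ordinal} {p : S} (hp : 0 < p.1)
    {s : Set S} (hs : s ∈ 𝓝 p) : ∃ c < p.1, ∀ q : S, q.1 ∈ Ioc c p.1 → q ∈ s := by
  obtain ⟨u, hu, hus⟩ := (mem_nhds_subtype S p s).1 hs
  obtain ⟨c, hc, hcu⟩ := exists_Ioc_subset_of_mem_nhds hu ⟨0, hp⟩
  exact ⟨c, hc, fun q hq => hus (hcu hq)⟩

lemma AlephOneCompactSet.exists_le_subset_biUnion {X : Type u} [TopologicalSpace X] {K : Set X}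
    (hK : AlephOneCompactSet K) {U : Ordinal → Set X} (hU : ∀ β < ω₁, IsOpen (U β))
    (hKU : K ⊆ ⋃ β < ω₁, U β) : ∃ β₀ < ω₁, K ⊆ ⋃ β ≤ β₀, U β := by
  have hcard : #(U '' Iio ω₁) ≤ ℵ₁ := by
    have := Cardinal.mk_image_le_lift (f := U) (s := Iio ω₁)
    rw [Cardinal.mk_Iio_ordinal, Ordinal.card_omega] at this
    simpa using this
  obtain ⟨𝒱, h𝒱U, h𝒱, hK𝒱⟩ := hK (U '' Iio ω₁) (by rintro _ ⟨β, hβ, rfl⟩; exact hU β hβ) hcard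
    (by rwa [sUnion_image])
  choose! idx hidx hUidx using fun V (hV : V ∈ 𝒱) => h𝒱U hV
  obtain ⟨β₀, hβ₀, hidxβ₀⟩ := (h𝒱.image idx).exists_lt_omega_one_forall_le
    (by rintro _ ⟨V, hV, rfl⟩; exact hidx V hV)
  refine ⟨β₀, hβ₀, hK𝒱.trans (sUnion_subset fun V hV => ?_)⟩
  rw [← hUidx V hV]
  exact subset_biUnion_of_mem (u := U) (hidxβ₀ _ (mem_image_of_mem idx hV))

theorem AlephOneCompactSet.exists_mapClusterPt_tail {X : Type u} [TopologicalSpace X]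
    {K : Set X} (hK : AlephOneCompactSet K) {S : Set Ordinal} [(tailBelowOmega1 S).NeBot]
    {f : S → X} (hfK : ∀ᶠ p in tailBelowOmega1 S, f p ∈ K) :
    ∃ z ∈ K, MapClusterPt z (tailBelowOmega1 S) f := by
  by_contra! h
  have hcover : K ⊆ ⋃ β < ω₁, (closure (f '' {p | β < p.1}))ᶜ := by
    intro z hz
    obtain ⟨s, hs, hzs⟩ : ∃ s ∈ map f (tailBelowOmega1 S), z ∉ closure s := by
      simpa [MapClusterPt, clusterPt_iff_forall_mem_closure] using h z hz
    obtain ⟨β, hβ, hβs⟩ := eventually_tailBelowOmega1.1 hs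
    refine mem_biUnion hβ fun hz' => hzs (closure_mono ?_ hz')
    rintro _ ⟨p, hp, rfl⟩
    exact hβs p hp
  obtain ⟨β₀, hβ₀, hKβ₀⟩ := hK.exists_le_subset_biUnion (fun β _ => isClosed_closure.isOpen_compl)
    hcover
  obtain ⟨p, hpK, hβ₀p⟩ := (hfK.and (eventually_tailBelowOmega1.2 ⟨β₀, hβ₀, fun p hp => hp⟩)).exists
  obtain ⟨β, hββ₀, hp⟩ := mem_iUnion₂.1 (hKβ₀ hpK)
  exact hp (subset_closure ⟨p, hββ₀.trans_lt hβ₀p, rfl⟩)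

lemma IsStationaryBelowOmega1.preimage_of_frequently {X : Type*} [TopologicalSpace X]
    {S : Set Ordinal} (hS : IsStationaryBelowOmega1 S) {f : S → X} (hf : Continuous f)
    {F : Set X} (hF : IsClosed F) (hfF : ∃ᶠ p in tailBelowOmega1 S, f p ∈ F) :
    IsStationaryBelowOmega1 (Subtype.val '' (f ⁻¹' F)) := by
  refine hS.of_closure_inter_subset (image_subset_iff.2 fun p _ => p.2) ?_ fun β hβ => ?_
  · rintro α ⟨hαS, hα⟩
    exact ⟨⟨α, hαS⟩, (hF.preimage hf).closure_subset (closure_subtype.2 hα), rfl⟩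
  · obtain ⟨p, hβp, hp⟩ :=
      frequently_iff.1 hfF (eventually_tailBelowOmega1.2 ⟨β, hβ, fun _ h => h⟩)
    exact ⟨p.1, ⟨p, hp, rfl⟩, hβp.le⟩

theorem tendsto_tailBelowOmega1_of_mapClusterPt {X : Type*} [TopologicalSpace X] [RegularSpace X]
    {S : Set Ordinal} (hS : IsStationaryBelowOmega1 S) {f : S → X} (hf : Continuous f) {z : X}
    (hz : MapClusterPt z (tailBelowOmega1 S) f) : Tendsto f (tailBelowOmega1 S) (𝓝 z) := by
  intro U hU
  obtain ⟨V, hVz, hVc, hVU⟩ := exists_mem_nhds_isClosed_subset (interior_mem_nhds.2 hU)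
  by_contra hfU
  have hT := hS.preimage_of_frequently hf isOpen_interior.isClosed_compl
    ((not_eventually.1 hfU).mono fun p hp hpU => hp (interior_subset hpU))
  -- Points of this stationary set are mapped outside `V`, hence so are intervals below them;
  -- pressing down turns this into a tail on which `f` avoids the neighbourhood `V` of `z`.
  obtain ⟨-, hfV⟩ := hT.exists_eventually_of_forall_Ioc (ι := Unit) (P := fun _ q => f q ∉ V) hS.1
    (by
      rintro _ ⟨p, hp, rfl⟩ hp₀
      obtain ⟨c, hc, hcV⟩ := exists_Ioc_subset_of_mem_nhds_subtype hp₀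
        (hf.continuousAt.preimage_mem_nhds (hVc.isOpen_compl.mem_nhds fun h => hp (hVU h)))
      exact ⟨c, hc, (), hcV⟩)
  obtain ⟨p, hpV, hpV'⟩ := ((hz.frequently hVz).and_eventually hfV).exists
  exact hpV' hpV

theorem Filter.Tendsto.eventually_eq_of_isGδ_singleton {α X : Type*} [TopologicalSpace X]
    {l : Filter α} [CountableInterFilter l] {f : α → X} {z : X} (hz : IsGδ ({z} : Set X))
    (hf : Tendsto f l (𝓝 z)) : ∀ᶠ a in l, f a = z := by
  obtain ⟨𝒰, h𝒰o, h𝒰c, h𝒰⟩ := hz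
  have hz𝒰 : z ∈ ⋂₀ 𝒰 := h𝒰 ▸ mem_singleton z
  have : ∀ᶠ a in l, ∀ U ∈ 𝒰, f a ∈ U :=
    (eventually_countable_ball h𝒰c).2 fun U hU => hf ((h𝒰o U hU).mem_nhds (hz𝒰 U hU))
  exact this.mono fun a ha => (h𝒰 ▸ ha : f a ∈ ({z} : Set X))

theorem exists_eventually_eq_of_eventually_mem {X : Type u} [TopologicalSpace X] [RegularSpace X]
    (hGδ : ∀ x : X, IsGδ ({x} : Set X)) {S : Set Ordinal} (hS : IsStationaryBelowOmega1 S)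
    {f : S → X} (hf : Continuous f) {K : Set X} (hK : AlephOneCompactSet K)
    (hfK : ∀ᶠ p in tailBelowOmega1 S, f p ∈ K) : ∃ y, ∀ᶠ p in tailBelowOmega1 S, f p = y := by
  have := hS.neBot_tail
  obtain ⟨z, -, hz⟩ := hK.exists_mapClusterPt_tail hfK
  exact ⟨z, (tendsto_tailBelowOmega1_of_mapClusterPt hS hf hz).eventually_eq_of_isGδ_singleton
    (hGδ z)⟩

theorem isClosed_setOf_exists_eventually_eq {α Y X : Type*} [TopologicalSpace Y]
    [SequentialSpace Y] [TopologicalSpace X] [T2Space X] {l : Filter α} [CountableInterFilter l]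
    [l.NeBot] {F : α → Y → X} (hF : ∀ a, Continuous (F a)) :
    IsClosed {t | ∃ y, ∀ᶠ a in l, F a t = y} := by
  refine IsSeqClosed.isClosed fun t s ht hts => ?_
  choose y hy using ht
  have hall : ∀ᶠ a in l, ∀ n, F a (t n) = y n := eventually_countable_forall.2 hy
  have hlim : ∀ a, (∀ n, F a (t n) = y n) → Tendsto y atTop (𝓝 (F a s)) :=
    fun a ha => (((hF a).tendsto s).comp hts).congr ha
  obtain ⟨a₀, ha₀⟩ := hall.exists
  exact ⟨F a₀ s, hall.mono fun a ha => tendsto_nhds_unique (hlim a ha) (hlim a₀ ha₀)⟩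

theorem isOpen_setOf_exists_eventually_eq {X : Type u} [TopologicalSpace X] [RegularSpace X]
    (hGδ : ∀ x : X, IsGδ ({x} : Set X)) (hnbhd : ∀ x : X, ∃ K ∈ 𝓝 x, AlephOneCompactSet K)
    {S : Set Ordinal} (hS : IsStationaryBelowOmega1 S) {Y : Type*} [TopologicalSpace Y]
    [FirstCountableTopology Y] {h : S × Y → X} (hh : Continuous h) :
    IsOpen {t | ∃ y, ∀ᶠ p in tailBelowOmega1 S, h (p, t) = y} := by
  refine isOpen_iff_mem_nhds.2 fun t ⟨y, hy⟩ => ?_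
  obtain ⟨K, hKy, hK⟩ := hnbhd y
  obtain ⟨B, hB⟩ := (𝓝 t).exists_antitone_basis
  obtain ⟨β, hβ, hyβ⟩ := eventually_tailBelowOmega1.1 hy
  obtain ⟨n, hn⟩ := (hS.inter_club (isClubBelowOmega1_Ioo hβ)).exists_eventually_of_forall_Ioc
    (P := fun n q => ∀ s ∈ B n, h (q, s) ∈ K) hS.1 fun α ⟨hαS, hβα, _⟩ hα₀ => by
      have : h ⁻¹' K ∈ 𝓝 (⟨α, hαS⟩, t) :=
        hh.continuousAt.preimage_mem_nhds (by rwa [hyβ ⟨α, hαS⟩ hβα])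
      obtain ⟨A, hA, B', hB', hAB'⟩ := mem_nhds_prod_iff.1 this
      obtain ⟨n, hn⟩ := hB.mem_iff.1 hB'
      obtain ⟨c, hc, hcA⟩ := exists_Ioc_subset_of_mem_nhds_subtype hα₀ hA
      exact ⟨c, hc, n, fun q hq s hs => hAB' ⟨hcA q hq, hn hs⟩⟩
  exact mem_of_superset (hB.mem n) fun s hs => exists_eventually_eq_of_eventually_mem hGδ hS
    (hh.comp (Continuous.prodMk_left s)) hK (hn.mono fun q hq => hq s hs)

lemma countable_range_of_eventually_eq {X : Type*} {S : Set Ordinal} {f : S → X} {y : X}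
    (hf : ∀ᶠ p in tailBelowOmega1 S, f p = y) : (range f).Countable := by
  obtain ⟨β, hβ, hfβ⟩ := eventually_tailBelowOmega1.1 hf
  have hIic : (Iic β).Countable :=
    Order.Iio_succ β ▸ countable_Iio_of_lt_omega_one ((isSuccLimit_omega 1).succ_lt hβ)
  refine (((hIic.preimage Subtype.val_injective).image f).union (countable_singleton y)).mono ?_
  rintro _ ⟨p, rfl⟩
  rcases le_or_gt p.1 β with hpβ | hβp
  · exact Or.inl ⟨p, hpβ, rfl⟩
  · exact Or.inr (hfβ p hβp)

/-- Let X be a regular space with Gδ points in which every point has a closed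
[ℵ₀,ℵ₁]-compact neighborhood, and S a stationary subset of ω₁ with the subspace topology.
There is no continuous h : S × [0,1] → X with h(·,0) constant and h(·,1) of uncountable
image. -/
theorem no_unraveling_homotopy_of_stationary
    (X : Type u) [TopologicalSpace X] [T3Space X]
    (hGδ : ∀ x : X, IsGδ ({x} : Set X))
    (hnbhd : ∀ x : X, ∃ K ∈ nhds x, IsClosed K ∧ AlephOneCompactSet K)
    (S : Set Ordinal) (hS : IsStationaryBelowOmega1 S) :
    ¬∃ h : S × unitInterval → X, Continuous h ∧
      (∀ p q : S, h (p, 0) = h (q, 0)) ∧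
      ¬(Set.range fun p : S => h (p, 1)).Countable := by
  rintro ⟨h, hh, h0, h1⟩
  have := hS.neBot_tail
  obtain ⟨p₀⟩ := nonempty_of_neBot (tailBelowOmega1 S)
  have hT : IsClopen {t | ∃ y, ∀ᶠ p in tailBelowOmega1 S, h (p, t) = y} :=
    ⟨isClosed_setOf_exists_eventually_eq fun p => hh.comp (Continuous.prodMk_right p),
      isOpen_setOf_exists_eventually_eq hGδ
        (fun x => (hnbhd x).imp fun _ ⟨hKx, _, hK⟩ => ⟨hKx, hK⟩) hS hh⟩
  obtain ⟨y, hy⟩ : (1 : unitInterval) ∈ {t | ∃ y, ∀ᶠ p in tailBelowOmega1 S, h (p, t) = y} :=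
    hT.eq_univ ⟨0, h (p₀, 0), .of_forall fun p => h0 p p₀⟩ ▸ mem_univ _
  exact h1 (countable_range_of_eventually_eq hy)
end

section
/- Any locally metrizable space X containing a topological copy of ω₁ is not contractible. -/
/-!
Given a contraction `h`, let `A` be the set of times `t` at which `β ↦ h (e β, t)` is eventually
constant on `ω₁`. It contains `0`, and not `1` since `e` is injective. Everything else rests on
countable sets of countable ordinals being bounded, so that `atTop` on `ω₁` has the countable
intersection property and increasing sequences converge. A continuous map from `ω₁` into a
metrizable space is then eventually constant, and a tube lemma for tails of `ω₁` shows that `A` is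
open. If `tₙ → t` with `tₙ ∈ A`, a common tail carries the eventual values of all `h (e ·, tₙ)`, and
this one sequence converges to every value of `h (e ·, t)` on that tail; local Hausdorffness then
forces `t ∈ A`. So `A` is clopen, contradicting connectedness of `[0, 1]`.
-/

open Set Filter Topology Ordinal unitInterval

universe u

local notation "Ω" => Set.Elem (Set.Iio ω₁)

instance : Nonempty Ω := ⟨⟨0, omega_pos 1⟩⟩

instance : NoMaxOrder Ω where
  exists_gt α := ⟨⟨α + 1, (Cardinal.isSuccLimit_omega 1).add_one_lt α.2⟩,
    Subtype.coe_lt_coe.1 (Order.lt_add_one_iff.2 le_rfl)⟩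

instance : CountableInterFilter (atTop : Filter Ω) where
  countable_sInter_mem S hS hmem := by
    have := hS.to_subtype
    choose α hα using fun s : S => mem_atTop_sets.1 (hmem s s.2)
    refine mem_atTop_sets.2 ⟨⟨⨆ s, (α s : Ordinal), iSup_lt_omega_one fun s => (α s).2⟩,
      fun β hβ s hs => hα ⟨s, hs⟩ β (le_trans ?_ hβ)⟩
    exact Subtype.coe_le_coe.1 (le_ciSup bddAbove_of_small (⟨s, hs⟩ : S))

theorem exists_tendsto_of_monotone {ζ : ℕ → Ω} (hζ : Monotone ζ) : ∃ δ, Tendsto ζ atTop (𝓝 δ) :=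
  ⟨⟨⨆ n, (ζ n : Ordinal), iSup_lt_omega_one fun n => (ζ n).2⟩,
    tendsto_subtype_rng.2 <| tendsto_atTop_ciSup (fun _ _ h => hζ h) bddAbove_of_small⟩

theorem exists_seq_tendsto_of_forall_exists_le (R : ℕ → Ω → Ω → Prop)
    (hR : ∀ n α, ∃ β ≥ α, R n α β) (α₀ : Ω) :
    ∃ ζ : ℕ → Ω, ∃ δ ≥ α₀, (∀ n, α₀ ≤ ζ n ∧ R n (ζ n) (ζ (n + 1))) ∧ Tendsto ζ atTop (𝓝 δ) := by
  choose g hg_le hg using hR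
  let ζ : ℕ → Ω := fun n => Nat.rec α₀ g n
  have hζ : Monotone ζ := monotone_nat_of_le_succ fun n => hg_le n (ζ n)
  obtain ⟨δ, hδ⟩ := exists_tendsto_of_monotone hζ
  exact ⟨ζ, δ, ge_of_tendsto' hδ fun n => hζ n.zero_le, fun n => ⟨hζ n.zero_le, hg n (ζ n)⟩, hδ⟩

theorem eventually_nhds_prod_atTop_of_isOpen {T : Type*} [TopologicalSpace T]
    [FirstCountableTopology T] {V : Set (T × Ω)} (hV : IsOpen V) {t₀ : T}
    (h : ∀ᶠ β in atTop, (t₀, β) ∈ V) : ∀ᶠ p in 𝓝 t₀ ×ˢ atTop, p ∈ V := by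
  obtain ⟨s, hs⟩ := (𝓝 t₀).exists_antitone_basis
  obtain ⟨α₀, hα₀⟩ := eventually_atTop.1 h
  by_contra hne
  have hR : ∀ n α, ∃ β ≥ α, ∃ t ∈ s n, (t, β) ∉ V := by
    intro n α
    by_contra! hc
    exact hne (mem_of_superset (prod_mem_prod (hs.mem n) (Ici_mem_atTop α))
      fun p hp => hc p.2 hp.2 p.1 hp.1)
  obtain ⟨ζ, δ, hδ, hζ, hζδ⟩ := exists_seq_tendsto_of_forall_exists_le _ hR α₀
  choose t hts htV using fun n => (hζ n).2
  have hlim : Tendsto (fun n => (t n, ζ (n + 1))) atTop (𝓝 (t₀, δ)) :=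
    (hs.tendsto hts).prodMk_nhds (hζδ.comp (tendsto_add_atTop_nat 1))
  obtain ⟨n, hn⟩ := (hlim.eventually_mem (hV.mem_nhds (hα₀ δ hδ))).exists
  exact htV n hn

theorem Continuous.eventuallyConst_atTop {M : Type*} [TopologicalSpace M]
    [TopologicalSpace.MetrizableSpace M] {f : Ω → M} (hf : Continuous f) :
    EventuallyConst f atTop := by
  let := TopologicalSpace.metrizableSpaceMetric M
  have hcauchy : ∀ ε > 0, ∃ α, ∀ β ≥ α, dist (f β) (f α) < ε := by
    intro ε hε
    by_contra! hfar
    obtain ⟨ζ, δ, -, hζ, hζδ⟩ := exists_seq_tendsto_of_forall_exists_le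
      (fun _ α β => ε ≤ dist (f β) (f α)) (fun _ => hfar) (Classical.arbitrary Ω)
    have hfζ := (hf.tendsto δ).comp hζδ
    have hdist : Tendsto (fun n => dist (f (ζ (n + 1))) (f (ζ n))) atTop (𝓝 0) := by
      simpa using (hfζ.comp (tendsto_add_atTop_nat 1)).dist hfζ
    obtain ⟨n, hn⟩ := (hdist.eventually (gt_mem_nhds hε)).exists
    exact (hζ n).2.not_gt hn
  choose α hα using fun n : ℕ => hcauchy (1 / (n + 1)) Nat.one_div_pos_of_nat
  obtain ⟨γ, hγ⟩ := eventually_atTop.1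
    (eventually_countable_forall.2 fun n => eventually_ge_atTop (α n))
  refine Filter.eventuallyConst_atTop.2 ⟨γ, fun β hβ => eq_of_forall_dist_le fun ε hε => ?_⟩
  obtain ⟨n, hn⟩ := exists_nat_one_div_lt (half_pos hε)
  have hβn := hα n β (hγ β hβ n)
  have hγn := hα n γ (hγ γ le_rfl n)
  calc dist (f β) (f γ) ≤ dist (f β) (f (α n)) + dist (f γ) (f (α n)) := dist_triangle_right _ _ _
    _ ≤ ε := by linarith

theorem Continuous.eventuallyConst_atTop_of_eventually_mem {X : Type*} [TopologicalSpace X]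
    {f : Ω → X} (hf : Continuous f) {U : Set X} [TopologicalSpace.MetrizableSpace U]
    (hU : ∀ᶠ β in atTop, f β ∈ U) : EventuallyConst f atTop := by
  obtain ⟨α₀, hα₀⟩ := eventually_atTop.1 hU
  let g : Ω → U := fun β => ⟨f (max β α₀), hα₀ _ (le_max_right _ _)⟩
  have hg : Continuous g := (hf.comp (continuous_id.max continuous_const)).subtype_mk _
  refine ((Continuous.eventuallyConst_atTop hg).comp Subtype.val).congr ?_
  filter_upwards [eventually_ge_atTop α₀] with β hβ
  simp [g, max_eq_left hβ]

theorem disjoint_nhds_nhds_of_mem_isOpen {X : Type*} [TopologicalSpace X] {U : Set X}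
    (hU : IsOpen U) [T2Space U] {a b : X} (ha : a ∈ U) (hb : b ∈ U) (hab : a ≠ b) :
    Disjoint (𝓝 a) (𝓝 b) := by
  have := (disjoint_map Subtype.val_injective).2
    (disjoint_nhds_nhds.2 (Subtype.coe_ne_coe.1 hab : (⟨a, ha⟩ : U) ≠ ⟨b, hb⟩))
  rwa [hU.isOpenEmbedding_subtypeVal.map_nhds_eq, hU.isOpenEmbedding_subtypeVal.map_nhds_eq] at this

theorem Continuous.eventuallyConst_atTop_of_eventually_tendsto {X : Type*} [TopologicalSpace X]
    (hloc : ∀ x : X, ∃ U : Set X, IsOpen U ∧ x ∈ U ∧ T2Space U) {f : Ω → X} (hf : Continuous f)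
    {ι : Type*} {l : Filter ι} [l.NeBot] {x : ι → X}
    (hx : ∀ᶠ β in atTop, Tendsto x l (𝓝 (f β))) : EventuallyConst f atTop := by
  obtain ⟨α₀, hα₀⟩ := eventually_atTop.1 hx
  by_contra hnc
  have hR : ∀ (_ : ℕ) α, ∃ β ≥ α, f β ≠ f α := by
    rw [Filter.eventuallyConst_atTop] at hnc
    push Not at hnc
    exact fun _ => hnc
  obtain ⟨ζ, δ, -, hζ, hζδ⟩ := exists_seq_tendsto_of_forall_exists_le _ hR α₀
  obtain ⟨U, hU, hδU, _⟩ := hloc (f δ)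
  have hfζ := ((hf.tendsto δ).comp hζδ).eventually_mem (hU.mem_nhds hδU)
  obtain ⟨n, hn, hn1⟩ := (hfζ.and ((tendsto_add_atTop_nat 1).eventually hfζ)).exists
  exact (hα₀ _ (hζ (n + 1)).1).not_tendsto
    (disjoint_nhds_nhds_of_mem_isOpen hU hn1 hn (hζ n).2) (hα₀ _ (hζ n).1)

theorem isOpen_setOf_eventuallyConst {T X : Type*} [TopologicalSpace T] [FirstCountableTopology T]
    [TopologicalSpace X]
    (hloc : ∀ x : X, ∃ U : Set X, IsOpen U ∧ x ∈ U ∧ TopologicalSpace.MetrizableSpace U)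
    {H : T × Ω → X} (hH : Continuous H) :
    IsOpen {t | EventuallyConst (fun β => H (t, β)) atTop} := by
  refine isOpen_iff_mem_nhds.2 fun t₀ ht₀ => ?_
  obtain ⟨α₀, hα₀⟩ := eventuallyConst_atTop.1 ht₀
  obtain ⟨U, hU, hU₀, _⟩ := hloc (H (t₀, α₀))
  have hV : ∀ᶠ β in atTop, (t₀, β) ∈ H ⁻¹' U :=
    eventually_atTop.2 ⟨α₀, fun β hβ => by simpa only [mem_preimage, hα₀ β hβ] using hU₀⟩
  filter_upwards [(eventually_nhds_prod_atTop_of_isOpen (hU.preimage hH) hV).curry] with t ht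
  exact (hH.comp (Continuous.prodMk_right t)).eventuallyConst_atTop_of_eventually_mem (U := U) ht

theorem isClosed_setOf_eventuallyConst {T X : Type*} [TopologicalSpace T] [SequentialSpace T]
    [TopologicalSpace X] (hloc : ∀ x : X, ∃ U : Set X, IsOpen U ∧ x ∈ U ∧ T2Space U)
    {H : T × Ω → X} (hH : Continuous H) :
    IsClosed {t | EventuallyConst (fun β => H (t, β)) atTop} := by
  refine IsSeqClosed.isClosed fun ts t₀ hts hlim => ?_
  choose α hα using fun n => eventuallyConst_atTop.1 (hts n)
  have hconst : ∀ᶠ β in atTop, ∀ n, H (ts n, β) = H (ts n, α n) :=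
    eventually_countable_forall.2 fun n => eventually_atTop.2 ⟨α n, hα n⟩
  refine (hH.comp (Continuous.prodMk_right t₀)).eventuallyConst_atTop_of_eventually_tendsto hloc
    (l := atTop) (x := fun n => H (ts n, α n)) ?_
  filter_upwards [hconst] with β hβ
  simp_rw [← hβ]
  exact ((hH.comp (Continuous.prodMk_left β)).tendsto t₀).comp hlim

theorem not_eventuallyConst_atTop_of_injective {α β : Type*} [SemilatticeSup α] [Nonempty α]
    [NoMaxOrder α] {f : α → β} (hf : Function.Injective f) : ¬EventuallyConst f atTop := by
  intro hc
  obtain ⟨a, ha⟩ := eventuallyConst_atTop.1 hc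
  obtain ⟨b, hab⟩ := exists_gt a
  exact hab.ne' (hf (ha b hab.le))

/-- Any locally metrizable space X containing a topological copy of ω₁
(the set of countable ordinals with the order topology) is not contractible. -/
theorem not_contractible_of_copy_of_omega1
    (X : Type u) [TopologicalSpace X]
    (hloc : ∀ x : X, ∃ U : Set X, IsOpen U ∧ x ∈ U ∧ TopologicalSpace.MetrizableSpace U)
    (e : (Set.Iio ω₁ : Set Ordinal) → X) (he : Topology.IsEmbedding e) :
    ¬∃ h : X × unitInterval → X, Continuous h ∧
      (∀ x : X, h (x, 1) = x) ∧ ∀ x y : X, h (x, 0) = h (y, 0) := by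
  rintro ⟨h, hcont, h1, h0⟩
  let H : I × Ω → X := fun p => h (e p.2, p.1)
  have hH : Continuous H := hcont.comp ((he.continuous.comp continuous_snd).prodMk continuous_fst)
  let A := {t | EventuallyConst (fun β => H (t, β)) atTop}
  have h0A : (0 : I) ∈ A := eventuallyConst_atTop.2 ⟨Classical.arbitrary Ω, fun β _ => h0 _ _⟩
  have h1A : (1 : I) ∉ A := by
    show ¬EventuallyConst (fun β => h (e β, 1)) atTop
    simpa only [h1] using not_eventuallyConst_atTop_of_injective he.injective
  have hloc' : ∀ x : X, ∃ U : Set X, IsOpen U ∧ x ∈ U ∧ T2Space U := fun x =>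
    let ⟨U, hU, hxU, _⟩ := hloc x; ⟨U, hU, hxU, inferInstance⟩
  have hA : A = Set.univ := IsClopen.eq_univ
    ⟨isClosed_setOf_eventuallyConst hloc' hH, isOpen_setOf_eventuallyConst hloc hH⟩ ⟨0, h0A⟩
  exact h1A (hA ▸ mem_univ _)
end

section
/- The long ray L = ω₁ × [0,1) with the lexicographic order topology is not contractible. -/
/-!
Given a contraction `h`, consider the set of times `t` at which `h (·, t)` is bounded above.
It contains `0` (a constant map) but not `1` (the identity, and the long ray has no maximum).
It is closed because countable subsets of the long ray are bounded above, and open because the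
long ray is sequentially compact: if `h (xₙ, tₙ) > z` with `tₙ → t`, a limit point `x` of `(xₙ)`
gives `h (x, t) ≥ z`. Connectedness of `[0,1]` gives the contradiction. Sequential compactness
holds because every sequence has a monotone subsequence, and every nonempty subset of the long
ray has an infimum: a decreasing sequence converges to its infimum, an increasing one to the
infimum of its (nonempty) set of upper bounds.
-/

open Set Topology Ordinal unitInterval

/-- The long ray: ω₁ × [0,1) with the lexicographic order. -/
def LongRay : Type 1 := ↥(Set.Iio (ω₁ : Ordinal.{0})) ×ₗ ↥(Set.Ico (0 : ℝ) 1)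

noncomputable instance : LinearOrder LongRay :=
  inferInstanceAs (LinearOrder (↥(Set.Iio (ω₁ : Ordinal.{0})) ×ₗ ↥(Set.Ico (0 : ℝ) 1)))

/-- The long ray carries the order topology. -/
noncomputable instance : TopologicalSpace LongRay := Preorder.topology LongRay

instance : OrderTopology LongRay := ⟨rfl⟩

open Filter

section OrderFacts

variable {α β : Type*}

theorem Set.Ico.exists_isGLB [ConditionallyCompleteLinearOrder α] {a b : α}
    {t : Set (Ico a b)} (ht : t.Nonempty) : ∃ c, IsGLB t c := by
  let _ : Inhabited (Ico a b) := ⟨ht.some⟩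
  have hbdd : BddBelow t :=
    ⟨⟨a, le_rfl, ht.some.2.1.trans_lt ht.some.2.2⟩, fun x _ => x.2.1⟩
  exact ⟨sInf t, isGLB_csInf ht hbdd⟩

theorem Prod.Lex.exists_isGLB [LinearOrder α] [WellFoundedLT α] [LinearOrder β]
    (hβ : ∀ t : Set β, t.Nonempty → ∃ b, IsGLB t b) {s : Set (α ×ₗ β)} (hs : s.Nonempty) :
    ∃ x, IsGLB s x := by
  obtain ⟨a, ⟨x₀, hx₀s, rfl⟩, ha⟩ :=
    wellFounded_lt.has_min ((fun x => (ofLex x).1) '' s) (hs.image _)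
  obtain ⟨g, hg⟩ := hβ {b | toLex ((ofLex x₀).1, b) ∈ s} ⟨(ofLex x₀).2, hx₀s⟩
  refine ⟨toLex ((ofLex x₀).1, g), fun x hx => ?_, fun l hl => ?_⟩
  · rw [← toLex_ofLex x, Prod.Lex.toLex_le_toLex]
    rcases (not_lt.1 (ha _ ⟨x, hx, rfl⟩)).lt_or_eq with hlt | heq
    · exact Or.inl hlt
    · refine Or.inr ⟨heq, hg.1 ?_⟩
      simpa [heq] using hx
  · have hl₀ := hl hx₀s
    rw [← toLex_ofLex l, ← toLex_ofLex x₀, Prod.Lex.toLex_le_toLex] at hl₀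
    rw [← toLex_ofLex l, Prod.Lex.toLex_le_toLex]
    refine hl₀.imp_right fun ⟨heq, _⟩ => ⟨heq, hg.2 fun b hb => ?_⟩
    have hlb := hl hb
    rw [← toLex_ofLex l, Prod.Lex.toLex_le_toLex] at hlb
    exact hlb.resolve_left (heq ▸ lt_irrefl _) |>.2

theorem Prod.Lex.bddAbove_of_bddAbove_image_fst [Preorder α] [NoMaxOrder α] [Preorder β]
    [Nonempty β] {s : Set (α ×ₗ β)} (hs : BddAbove ((fun x => (ofLex x).1) '' s)) :
    BddAbove s := by
  obtain ⟨a, ha⟩ := hs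
  obtain ⟨a', haa'⟩ := exists_gt a
  refine ⟨toLex (a', Classical.arbitrary β), fun x hx => ?_⟩
  rw [← toLex_ofLex x, Prod.Lex.toLex_le_toLex]
  exact Or.inl ((ha ⟨x, hx, rfl⟩).trans_lt haa')

theorem Ordinal.bddAbove_of_countable_Iio_omega_one {s : Set (Iio (ω₁ : Ordinal.{u}))}
    (hs : s.Countable) : BddAbove s := by
  have := hs.to_subtype
  exact ⟨⟨⨆ x : s, x.1.1, iSup_lt_omega_one fun x => x.1.2⟩,
    fun x hx => Ordinal.le_iSup (fun x : s => x.1.1) ⟨x, hx⟩⟩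

instance Ordinal.noMaxOrder_Iio_omega (o : Ordinal.{u}) : NoMaxOrder (Iio (ω_ o)) :=
  (Cardinal.isSuccLimit_omega o).isSuccPrelimit.noMaxOrder_Iio

end OrderFacts

theorem seqCompactSpace_of_exists_isGLB {X : Type*} [LinearOrder X] [TopologicalSpace X]
    [OrderTopology X] (hglb : ∀ s : Set X, s.Nonempty → ∃ a, IsGLB s a)
    (hbdd : ∀ s : Set X, s.Countable → BddAbove s) : SeqCompactSpace X := by
  refine ⟨fun u _ => ?_⟩
  obtain ⟨g, hmono | hanti⟩ := exists_increasing_or_nonincreasing_subseq (· ≤ ·) u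
  · have hmono : Monotone (u ∘ g) := monotone_nat_of_le_succ fun n => hmono n _ n.lt_succ_self
    obtain ⟨a, ha⟩ := hglb _ (hbdd _ (countable_range (u ∘ g)))
    exact ⟨a, mem_univ a, g, g.strictMono, tendsto_atTop_isLUB hmono (isGLB_upperBounds.1 ha)⟩
  · have hanti : Antitone (u ∘ g) :=
      antitone_nat_of_succ_le fun n => (not_le.1 (hanti n _ n.lt_succ_self)).le
    obtain ⟨a, ha⟩ := hglb _ (range_nonempty (u ∘ g))
    exact ⟨a, mem_univ a, g, g.strictMono, tendsto_atTop_isGLB hanti ha⟩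

section BoundedSlices

variable {X Y : Type*} [LinearOrder X] [TopologicalSpace X] [TopologicalSpace Y]
  [SequentialSpace Y] {h : X × Y → X}

theorem isClosed_setOf_bddAbove_range [ClosedIicTopology X]
    (hbdd : ∀ s : Set X, s.Countable → BddAbove s) (hh : Continuous h) :
    IsClosed {y | BddAbove (range fun x => h (x, y))} := by
  refine IsSeqClosed.isClosed fun t y hbt hty => ?_
  choose b hb using hbt
  obtain ⟨c, hc⟩ := hbdd _ (countable_range b)
  refine ⟨c, forall_mem_range.2 fun x => ?_⟩
  have hlim : Tendsto (fun n => h (x, t n)) atTop (𝓝 (h (x, y))) :=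
    (hh.tendsto _).comp (tendsto_const_nhds.prodMk_nhds hty)
  exact le_of_tendsto' hlim fun n => (hb n ⟨x, rfl⟩).trans (hc ⟨n, rfl⟩)

theorem isOpen_setOf_bddAbove_range [ClosedIciTopology X] [NoMaxOrder X] [SeqCompactSpace X]
    (hh : Continuous h) : IsOpen {y | BddAbove (range fun x => h (x, y))} := by
  refine isClosed_compl_iff.1 <| IsSeqClosed.isClosed fun t y hunb hty ⟨b, hb⟩ => ?_
  obtain ⟨z, hbz⟩ := exists_gt b
  have hlarge : ∀ n, ∃ x, z < h (x, t n) := fun n => by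
    obtain ⟨_, ⟨x, rfl⟩, hx⟩ := not_bddAbove_iff.1 (hunb n) z
    exact ⟨x, hx⟩
  choose x hx using hlarge
  obtain ⟨x', φ, hφ, hxφ⟩ := SeqCompactSpace.tendsto_subseq x
  have hlim : Tendsto (fun n => h (x (φ n), t (φ n))) atTop (𝓝 (h (x', y))) :=
    (hh.tendsto _).comp (hxφ.prodMk_nhds (hty.comp hφ.tendsto_atTop))
  have hz : z ≤ h (x', y) := ge_of_tendsto' hlim fun n => (hx _).le
  exact (hb ⟨x', rfl⟩).not_gt (hbz.trans_le hz)

end BoundedSlices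

namespace LongRay

instance : NoMaxOrder LongRay :=
  inferInstanceAs (NoMaxOrder (Iio (ω₁ : Ordinal.{0}) ×ₗ Ico (0 : ℝ) 1))

theorem exists_isGLB {s : Set LongRay} (hs : s.Nonempty) : ∃ a, IsGLB s a :=
  Prod.Lex.exists_isGLB (fun _ => Set.Ico.exists_isGLB) hs

theorem bddAbove_of_countable {s : Set LongRay} (hs : s.Countable) : BddAbove s :=
  Prod.Lex.bddAbove_of_bddAbove_image_fst
    (Ordinal.bddAbove_of_countable_Iio_omega_one (hs.image _))

instance : SeqCompactSpace LongRay :=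
  seqCompactSpace_of_exists_isGLB (fun _ => exists_isGLB) fun _ => bddAbove_of_countable

end LongRay

/-- The long ray L = ω₁ × [0,1) with the lexicographic order topology is
not contractible. -/
theorem longRay_not_contractible :
    ¬∃ h : LongRay × unitInterval → LongRay, Continuous h ∧
      (∀ x : LongRay, h (x, 1) = x) ∧ ∀ x y : LongRay, h (x, 0) = h (y, 0) := by
  rintro ⟨h, hh, h_one, h_zero⟩
  set B : Set unitInterval := {t | BddAbove (range fun x => h (x, t))}
  have hB : IsClopen B :=
    ⟨isClosed_setOf_bddAbove_range (fun _ => LongRay.bddAbove_of_countable) hh,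
      isOpen_setOf_bddAbove_range hh⟩
  have h0 : (0 : unitInterval) ∈ B := LongRay.bddAbove_of_countable <|
    Set.Subsingleton.countable <| forall_mem_range.2 fun x => forall_mem_range.2 fun y => h_zero x y
  have h1 : (1 : unitInterval) ∈ B := hB.eq_univ ⟨0, h0⟩ ▸ mem_univ _
  simp only [B, mem_ofPred_eq, h_one, range_id'] at h1
  exact not_bddAbove_univ h1
end
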